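/- Consider the two-species Lotka–Volterra metacommunity model on ℝ^{2k}_+: X^i_{t+1} = X^i_t diag{f^i_1(X_t),…,f^i_k(X_t)} D^i for i = 1,2, where f^i_j(x) = exp(−Σ_{h=1}^2 B^j_{ih} x^{hj} + c^j_i), each B^j is a 2×2 matrix with positive entries, each c^j is a positive 2-vector, and each D^i is a primitive column-stochastic k×k matrix. For every ε > 0 there exists δ_0 ∈ (0,1) such that if d^i_{jj} ∈ (δ_0, 1] for all i ∈ {1,2} and all j ∈ {1,…,k}, then r_2(μ) ≥ max_j (c^j_2 − B^j_{21} c^j_1 / B^j_{11}) − ε for every invariant Borel probability measure μ of the model supported by S^1_0 = {x ∈ ℝ^{2k}_+ : ‖x^2‖ = 0} (species 1 alone present). -/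

import Mathlib

/-
Along an orbit on which species 2 (index `1`) is absent, the cocycle of species 2 dominates
the product of its diagonal entries `exp (c^j_2 - B^j_{21} x^{1j}_s) d^2_{jj}`, so `r_2(x)` is at
least the upper limit of the Birkhoff averages of `c^j_2 + log d^2_{jj} - B^j_{21} x^{1j}`.
Integrating against the invariant measure (reverse Fatou) gives
`r_2(μ) ≥ c^j_2 + log d^2_{jj} - B^j_{21} ∫ x^{1j} dμ`.
For species 1, `d^1_{jj}` close to `1` makes its density in patch `j` follow the Ricker map
`x ↦ x exp (c^j_1 - B^j_{11} x)` up to a small immigration term, and then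
`log (x^{1j} + s)` grows by at most `c^j_1 + ρ - B^j_{11} x^{1j}` per step. Its increments
integrate to zero against `μ`, so `∫ x^{1j} dμ ≤ (c^j_1 + ρ) / B^j_{11}`.
-/

open MeasureTheory Filter Topology

noncomputable section

namespace RP

/-- The state space: species `i` has `n i` individual states;
points are tuples of row vectors. -/
abbrev St (m : ℕ) (n : Fin m → ℕ) := ∀ i : Fin m, Fin (n i) → ℝ

/-- A block-diagonal collection of matrices, one block per species. -/
abbrev Blocks (m : ℕ) (n : Fin m → ℕ) := ∀ i : Fin m, Matrix (Fin (n i)) (Fin (n i)) ℝ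

variable {m : ℕ} {n : Fin m → ℕ}

/-- The nonnegative cone `ℝ^n_+`. -/
def cone (m : ℕ) (n : Fin m → ℕ) : Set (St m n) := {x | ∀ i j, 0 ≤ x i j}

/-- The ℓ¹-norm `‖x^i‖` of the subvector of species `i`. -/
def snorm (x : St m n) (i : Fin m) : ℝ := ∑ j, |x i j|

/-- The extinction set `S₀ = {x ∈ ℝ^n_+ : ∏ᵢ ‖x^i‖ = 0}`. -/
def extinct (m : ℕ) (n : Fin m → ℕ) : Set (St m n) :=
  {x ∈ cone m n | ∏ i, snorm x i = 0}

/-- The update map `Φ_A (x) = x A(x)` (blockwise, row vectors on the left). -/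
def Phi (A : St m n → Blocks m n) (x : St m n) : St m n :=
  fun i => Matrix.vecMul (x i) (A x i)

/-- An explicit norm on matrices (sum of absolute values of the entries). -/
def mnorm {a b : Type*} [Fintype a] [Fintype b] (M : Matrix a b ℝ) : ℝ :=
  ∑ j, ∑ k, |M j k|

/-- The matrix cocycle `A_i(X_0) A_i(X_1) ⋯ A_i(X_{t-1})` along the orbit of `x`. -/
def coc (A : St m n → Blocks m n) (i : Fin m) (x : St m n) :
    ℕ → Matrix (Fin (n i)) (Fin (n i)) ℝ
  | 0 => 1
  | t + 1 => coc A i x t * A ((Phi A)^[t] x) i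

/-- The long-term growth rate `r_i(x)` of species `i` starting from `x`. -/
def rate (A : St m n → Blocks m n) (i : Fin m) (x : St m n) : ℝ :=
  Filter.limsup (fun t : ℕ => Real.log (mnorm (coc A i x t)) / t) Filter.atTop

/-- The long-term growth rate `r_i(μ) = ∫ r_i dμ`. -/
def rateMu (A : St m n → Blocks m n) (i : Fin m) (μ : Measure (St m n)) : ℝ :=
  ∫ x, rate A i x ∂μ

/-- A nonnegative primitive matrix. -/
def IsPrimitive {d : ℕ} (P : Matrix (Fin d) (Fin d) ℝ) : Prop :=
  (∀ j k, 0 ≤ P j k) ∧ ∃ t : ℕ, 0 < t ∧ ∀ j k, 0 < (P ^ t) j k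

/-- Hypotheses H1–H3 of the model. -/
structure Hyp (A : St m n → Blocks m n) (SA : Set (St m n)) : Prop where
  H1cont : Continuous A
  H1nonneg : ∀ x i j k, 0 ≤ A x i j k
  H2 : ∀ i, ∃ P : Matrix (Fin (n i)) (Fin (n i)) ℝ, IsPrimitive P ∧
    ∀ x ∈ cone m n, ∀ j k, (A x i j k = 0 ↔ P j k = 0)
  H3compact : IsCompact SA
  H3sub : SA ⊆ cone m n
  H3absorb : ∀ x ∈ cone m n, ∃ T : ℕ, ∀ t ≥ T, (Phi A)^[t] x ∈ SA

/-- The ω-limit set of `x` under iteration of `f`. -/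
def omegaSet {X : Type*} [TopologicalSpace X] (f : X → X) (x : X) : Set X :=
  {y | ∃ tk : ℕ → ℕ, StrictMono tk ∧ Tendsto (fun s => f^[tk s] x) atTop (𝓝 y)}

/-- `M` is an isolated invariant set for `f` restricted to `Y`: it has a compact
neighborhood `N` in `Y` whose largest invariant subset is contained in `M`. -/
def IsolatedIn {X : Type*} [TopologicalSpace X] (f : X → X) (M Y : Set X) : Prop :=
  ∃ N : Set X, IsCompact N ∧ N ⊆ Y ∧ M ⊆ N ∧ (∀ x ∈ M, N ∈ 𝓝[Y] x) ∧
    ∀ K ⊆ N, f '' K = K → K ⊆ M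

/-- `M ⊆ S₀` is unsaturated: isolated in all of `ℝ^n_+` and its stable set
lies in `S₀`. -/
def Unsaturated (A : St m n → Blocks m n) (M : Set (St m n)) : Prop :=
  IsolatedIn (Phi A) M (cone m n) ∧
    ∀ x ∈ cone m n, omegaSet (Phi A) x ⊆ M → x ∈ extinct m n

/-- The δ-neighborhood of a set within the cone. -/
def nbhd (S : Set (St m n)) (δ : ℝ) : Set (St m n) :=
  {x ∈ cone m n | ∃ y ∈ S, dist x y < δ}

/-- A δ-perturbation of the model `(A, S_A)`. -/
structure Pert (A : St m n → Blocks m n) (SA : Set (St m n)) (δ : ℝ)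
    (B : St m n → Blocks m n) (SB : Set (St m n)) : Prop where
  hyp : Hyp B SB
  sub : SB ⊆ nbhd SA δ
  close : ∀ x ∈ nbhd SA 1, ∀ i j k, |A x i j k - B x i j k| ≤ δ

/-- Permanence with repulsion constant `η`. -/
def PermanentWith (f : St m n → St m n) (η : ℝ) : Prop :=
  ∀ x ∈ cone m n, (∀ i, 0 < snorm x i) →
    ∃ T : ℕ, ∀ t ≥ T, ∀ i, η < snorm (f^[t] x) i

/-- Permanence. -/
def Permanent (f : St m n → St m n) : Prop := ∃ η > 0, PermanentWith f η

/-- Robust permanence: all sufficiently small perturbations are permanent with a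
common constant. -/
def RobustlyPermanent (A : St m n → Blocks m n) (SA : Set (St m n)) : Prop :=
  ∃ δ > 0, ∃ η > 0, ∀ B SB, Pert A SA δ B SB → PermanentWith (Phi B) η

/-- The global attractor `G_A`. -/
def GA (A : St m n → Blocks m n) (SA : Set (St m n)) : Set (St m n) :=
  ⋂ s : ℕ, closure (⋃ t ∈ Set.Ici s, (Phi A)^[t] '' SA)

/-- A backward orbit through `x` lying in `M`. -/
def BackOrbit {X : Type*} (f : X → X) (M : Set X) (x : X) (σ : ℕ → X) : Prop :=
  σ 0 = x ∧ (∀ s, f (σ (s + 1)) = σ s) ∧ ∀ s, σ s ∈ M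

/-- The α-limit set of a backward orbit. -/
def alphaSet {X : Type*} [TopologicalSpace X] (σ : ℕ → X) : Set X :=
  {y | ∃ sk : ℕ → ℕ, StrictMono sk ∧ Tendsto (fun s => σ (sk s)) atTop (𝓝 y)}

/-- A Morse decomposition `{M_1, …, M_k}` of a compact invariant set `M` for `f`. -/
def MorseDecomp {X : Type*} [TopologicalSpace X] (f : X → X) (M : Set X)
    {k : ℕ} (Ms : Fin k → Set X) : Prop :=
  (∀ a b, a ≠ b → Disjoint (Ms a) (Ms b)) ∧
  (∀ a, Ms a ⊆ M ∧ IsCompact (Ms a) ∧ f '' Ms a = Ms a ∧ IsolatedIn f (Ms a) M) ∧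
  (∀ x ∈ M \ ⋃ a, Ms a, ∃ a, omegaSet f x ⊆ Ms a ∧
    ∀ σ : ℕ → X, BackOrbit f M x σ → ∃ b, a < b ∧ alphaSet σ ⊆ Ms b)

/-- `μ` is a weak* limit point of the sequence of measures `Lam`. -/
def WeakLimitPt {X : Type*} [TopologicalSpace X] [MeasurableSpace X]
    (Lam : ℕ → Measure X) (μ : Measure X) : Prop :=
  ∃ tk : ℕ → ℕ, StrictMono tk ∧
    ∀ g : BoundedContinuousFunction X ℝ,
      Tendsto (fun s => ∫ y, g y ∂(Lam (tk s))) atTop (𝓝 (∫ y, g y ∂μ))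

/-- The empirical occupation measures `Lam_t(x) = (1/t) ∑_{s<t} δ_{f^s(x)}`. -/
def emp {X : Type*} [MeasurableSpace X] (f : X → X) (x : X) (t : ℕ) : Measure X :=
  (t : ENNReal)⁻¹ • ∑ s ∈ Finset.range t, Measure.dirac (f^[s] x)

/-- An invariant Borel probability measure for `f`. -/
def InvProb {X : Type*} [MeasurableSpace X] (f : X → X) (μ : Measure X) : Prop :=
  IsProbabilityMeasure μ ∧ μ.map f = μ

end RP

namespace RP

open Real

section Cocycle

variable {m : ℕ} {n : Fin m → ℕ}

lemma snorm_eq_zero_iff {x : St m n} {i : Fin m} :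
    snorm x i = 0 ↔ x i = 0 := by
  simp [snorm, Finset.sum_eq_zero_iff_of_nonneg, funext_iff]

lemma mnorm_nonneg {a b : Type*} [Fintype a] [Fintype b] (M : Matrix a b ℝ) : 0 ≤ mnorm M :=
  Finset.sum_nonneg fun _ _ => Finset.sum_nonneg fun _ _ => abs_nonneg _

lemma abs_apply_le_mnorm {a b : Type*} [Fintype a] [Fintype b] (M : Matrix a b ℝ) (j : a)
    (l : b) : |M j l| ≤ mnorm M :=
  (Finset.single_le_sum (f := fun l' => |M j l'|) (fun _ _ => abs_nonneg _)
      (Finset.mem_univ l)).trans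
    (Finset.single_le_sum (f := fun j' => ∑ l', |M j' l'|)
      (fun _ _ => Finset.sum_nonneg fun _ _ => abs_nonneg _) (Finset.mem_univ j))

lemma mnorm_mul_le {a b c : Type*} [Fintype a] [Fintype b] [Fintype c] (M : Matrix a b ℝ)
    (N : Matrix b c ℝ) : mnorm (M * N) ≤ mnorm M * mnorm N := by
  have hrow : ∀ r, ∑ l, |N r l| ≤ mnorm N := fun r =>
    Finset.single_le_sum (f := fun r' => ∑ l, |N r' l|)
      (fun _ _ => Finset.sum_nonneg fun _ _ => abs_nonneg _) (Finset.mem_univ r)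
  calc mnorm (M * N) ≤ ∑ j, ∑ r, |M j r| * ∑ l, |N r l| := by
        refine Finset.sum_le_sum fun j _ => ?_
        simp_rw [Finset.mul_sum]
        rw [Finset.sum_comm]
        refine Finset.sum_le_sum fun l _ => ?_
        rw [Matrix.mul_apply]
        simpa only [abs_mul] using Finset.abs_sum_le_sum_abs (fun r => M j r * N r l) Finset.univ
    _ ≤ ∑ j, ∑ r, |M j r| * mnorm N := by gcongr with j _ r _; exact hrow r
    _ = mnorm M * mnorm N := by simp only [mnorm, Finset.sum_mul]

lemma mnorm_one (d : Type*) [Fintype d] [DecidableEq d] :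
    mnorm (1 : Matrix d d ℝ) = Fintype.card d := by
  simp [mnorm, Matrix.one_apply, apply_ite abs]

lemma continuous_mnorm {a b : Type*} [Fintype a] [Fintype b] :
    Continuous (mnorm : Matrix a b ℝ → ℝ) := by
  unfold mnorm
  fun_prop

lemma continuous_Phi {A : St m n → Blocks m n} (hA : Continuous A) : Continuous (Phi A) :=
  continuous_pi fun i => (continuous_apply i).matrix_vecMul ((continuous_apply i).comp hA)

lemma continuous_coc {A : St m n → Blocks m n} (hA : Continuous A) (i : Fin m) (t : ℕ) :
    Continuous fun x => coc A i x t := by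
  induction t with
  | zero => exact continuous_const
  | succ t ih =>
      exact ih.matrix_mul ((continuous_apply i).comp (hA.comp ((continuous_Phi hA).iterate t)))

lemma coc_nonneg {A : St m n → Blocks m n} {i : Fin m} (hA : ∀ y j l, 0 ≤ A y i j l)
    (x : St m n) (t : ℕ) (j l : Fin (n i)) : 0 ≤ coc A i x t j l := by
  induction t generalizing l with
  | zero => simp only [coc, Matrix.one_apply]; split <;> norm_num
  | succ t ih =>
      simp only [coc, Matrix.mul_apply]
      exact Finset.sum_nonneg fun r _ => mul_nonneg (ih r) (hA _ r l)

lemma prod_diag_le_coc {A : St m n → Blocks m n} {i : Fin m} (hA : ∀ y j l, 0 ≤ A y i j l)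
    (x : St m n) (j : Fin (n i)) (t : ℕ) :
    ∏ s ∈ Finset.range t, A ((Phi A)^[s] x) i j j ≤ coc A i x t j j := by
  induction t with
  | zero => simp [coc]
  | succ t ih =>
      rw [Finset.prod_range_succ]
      calc _ ≤ coc A i x t j j * A ((Phi A)^[t] x) i j j := by gcongr; exact hA _ j j
        _ ≤ ∑ r, coc A i x t j r * A ((Phi A)^[t] x) i r j :=
          Finset.single_le_sum (f := fun r => coc A i x t j r * A ((Phi A)^[t] x) i r j)
            (fun r _ => mul_nonneg (coc_nonneg hA x t j r) (hA _ r j)) (Finset.mem_univ j)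

lemma mnorm_coc_le {A : St m n → Blocks m n} {i : Fin m} {x : St m n} {K : ℝ}
    (hK : ∀ s, mnorm (A ((Phi A)^[s] x) i) ≤ K) (t : ℕ) :
    mnorm (coc A i x t) ≤ n i * K ^ t := by
  induction t with
  | zero => simp [coc, mnorm_one]
  | succ t ih =>
      calc mnorm (coc A i x (t + 1)) ≤ mnorm (coc A i x t) * mnorm (A ((Phi A)^[t] x) i) :=
            mnorm_mul_le _ _
        _ ≤ n i * K ^ t * K :=
            mul_le_mul ih (hK t) (mnorm_nonneg _)
              (by have := (mnorm_nonneg _).trans (hK 0); positivity)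
        _ = n i * K ^ (t + 1) := by ring

end Cocycle

section Birkhoff

variable {α : Type*}

lemma birkhoffAverage_mem_Icc {f : α → α} {g : α → ℝ} {x : α} {lo hi : ℝ}
    (hg : ∀ s, g (f^[s] x) ∈ Set.Icc lo hi) {t : ℕ} (ht : t ≠ 0) :
    birkhoffAverage ℝ f g t x ∈ Set.Icc lo hi := by
  have ht' : (0 : ℝ) < t := by positivity
  rw [birkhoffAverage, birkhoffSum, smul_eq_mul, inv_mul_eq_div, Set.mem_Icc,
    le_div_iff₀ ht', div_le_iff₀ ht']
  constructor
  · simpa [mul_comm] using Finset.card_nsmul_le_sum (Finset.range t) _ lo fun s _ => (hg s).1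
  · simpa [mul_comm] using Finset.sum_le_card_nsmul (Finset.range t) _ hi fun s _ => (hg s).2

variable [MeasurableSpace α] {μ : Measure α} {T : α → α}

lemma integral_comp_of_measurePreserving {β : Type*} [MeasurableSpace β] {ν : Measure β}
    {f : α → β} (hf : MeasurePreserving f μ ν) {g : β → ℝ} (hg : AEStronglyMeasurable g ν) :
    ∫ x, g (f x) ∂μ = ∫ y, g y ∂ν := by
  rw [← integral_map hf.aemeasurable (by rwa [hf.map_eq]), hf.map_eq]

lemma integral_birkhoffAverage (hT : MeasurePreserving T μ μ) {g : α → ℝ} (hg : Integrable g μ)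
    {t : ℕ} (ht : t ≠ 0) : ∫ x, birkhoffAverage ℝ T g t x ∂μ = ∫ x, g x ∂μ := by
  have hiter : ∀ s, ∫ x, g (T^[s] x) ∂μ = ∫ x, g x ∂μ := fun s =>
    integral_comp_of_measurePreserving (hT.iterate s) hg.aestronglyMeasurable
  simp only [birkhoffAverage, birkhoffSum, smul_eq_mul]
  rw [integral_const_mul, integral_finsetSum (f := fun s x => g (T^[s] x)) _ fun s _ =>
      (hT.iterate s).integrable_comp_of_integrable hg]
  simp only [hiter, Finset.sum_const, Finset.card_range, nsmul_eq_mul]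
  field_simp

lemma measurable_birkhoffAverage (hT : Measurable T) {g : α → ℝ} (hg : Measurable g) (t : ℕ) :
    Measurable (birkhoffAverage ℝ T g t) :=
  (Finset.measurable_sum (Finset.range t) fun s _ => hg.comp (hT.iterate s)).const_smul
    ((t : ℝ)⁻¹)

lemma limsup_mem_Icc_of_forall_mem_Icc {u : ℕ → ℝ} {a b : ℝ} (hu : ∀ t, u t ∈ Set.Icc a b) :
    limsup u atTop ∈ Set.Icc a b :=
  ⟨le_limsup_of_frequently_le (Frequently.of_forall fun t => (hu t).1)
      (isBoundedUnder_of_eventually_le (Eventually.of_forall fun t => (hu t).2)),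
    limsup_le_of_le (isCoboundedUnder_le_of_le atTop fun t => (hu t).1)
      (Eventually.of_forall fun t => (hu t).2)⟩

lemma ofReal_limsup_sub_of_forall_mem_Icc {u : ℕ → ℝ} {a b : ℝ}
    (hu : ∀ t, u t ∈ Set.Icc a b) :
    ENNReal.ofReal (limsup u atTop - a) = limsup (fun t => ENNReal.ofReal (u t - a)) atTop :=
  Monotone.map_limsup_of_continuousAt (f := fun y => ENNReal.ofReal (y - a))
    (fun _ _ h => ENNReal.ofReal_le_ofReal (by linarith)) u
    (ENNReal.continuous_ofReal.comp (continuous_sub_right a)).continuousAt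
    (isBoundedUnder_of_eventually_le (Eventually.of_forall fun t => (hu t).2))
    (isCoboundedUnder_le_of_le atTop fun t => (hu t).1)

lemma lintegral_ofReal_sub_const [IsFiniteMeasure μ] {h : α → ℝ} (hh : Integrable h μ) {a : ℝ}
    (ha : ∀ᵐ x ∂μ, a ≤ h x) :
    ∫⁻ x, ENNReal.ofReal (h x - a) ∂μ = ENNReal.ofReal (∫ x, h x ∂μ - μ.real Set.univ * a) := by
  rw [← ofReal_integral_eq_lintegral_ofReal (f := fun x => h x - a)
    (hh.sub (integrable_const a)) (ha.mono fun x hx => sub_nonneg.2 hx),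
    integral_sub hh (integrable_const a), integral_const, smul_eq_mul]

/-- Reverse Fatou lemma; after shifting by `a` it is `limsup_lintegral_le`. -/
lemma le_integral_limsup_of_le_integral [IsFiniteMeasure μ] {f : ℕ → α → ℝ}
    (hf : ∀ t, Measurable (f t)) {a b I : ℝ} (hbd : ∀ᵐ x ∂μ, ∀ t, f t x ∈ Set.Icc a b)
    (hI : ∀ t, I ≤ ∫ x, f t x ∂μ) : I ≤ ∫ x, limsup (fun t => f t x) atTop ∂μ := by
  set L := fun x => limsup (fun t => f t x) atTop
  have hL : ∀ᵐ x ∂μ, L x ∈ Set.Icc a b := hbd.mono fun _ => limsup_mem_Icc_of_forall_mem_Icc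
  have hLint : Integrable L μ := Integrable.of_mem_Icc a b (Measurable.limsup hf).aemeasurable hL
  have hfint : ∀ t, Integrable (f t) μ := fun t =>
    Integrable.of_mem_Icc a b (hf t).aemeasurable (hbd.mono fun x hx => hx t)
  have key : ENNReal.ofReal (I - μ.real Set.univ * a)
      ≤ ENNReal.ofReal (∫ x, L x ∂μ - μ.real Set.univ * a) :=
    calc ENNReal.ofReal (I - μ.real Set.univ * a)
        ≤ limsup (fun t => ∫⁻ x, ENNReal.ofReal (f t x - a) ∂μ) atTop :=
          le_limsup_of_frequently_le' (Frequently.of_forall fun t => by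
            rw [lintegral_ofReal_sub_const (hfint t) (hbd.mono fun x hx => (hx t).1)]
            exact ENNReal.ofReal_le_ofReal (by linarith [hI t]))
      _ ≤ ∫⁻ x, limsup (fun t => ENNReal.ofReal (f t x - a)) atTop ∂μ :=
          limsup_lintegral_le (fun _ => ENNReal.ofReal (b - a))
            (fun t => ((hf t).sub_const a).ennreal_ofReal)
            (fun t => hbd.mono fun x hx => ENNReal.ofReal_le_ofReal (by linarith [(hx t).2]))
            (by simpa using ENNReal.mul_ne_top ENNReal.ofReal_ne_top (measure_ne_top μ _))
      _ = ∫⁻ x, ENNReal.ofReal (L x - a) ∂μ :=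
          lintegral_congr_ae (hbd.mono fun _ hx => (ofReal_limsup_sub_of_forall_mem_Icc hx).symm)
      _ = ENNReal.ofReal (∫ x, L x ∂μ - μ.real Set.univ * a) :=
          lintegral_ofReal_sub_const hLint (hL.mono fun _ hx => hx.1)
  have hnonneg : 0 ≤ ∫ x, L x ∂μ - μ.real Set.univ * a := by
    rw [← smul_eq_mul, ← integral_const, ← integral_sub hLint (integrable_const a)]
    exact integral_nonneg_of_ae (hL.mono fun x hx => sub_nonneg.2 hx.1)
  show I ≤ ∫ x, L x ∂μ
  linarith [(ENNReal.ofReal_le_ofReal_iff hnonneg).1 key]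

lemma integral_nonneg_of_sub_le (hT : MeasurePreserving T μ μ) {φ ψ : α → ℝ}
    (hφ : Integrable φ μ) (hψ : Integrable ψ μ) (h : ∀ᵐ x ∂μ, φ (T x) - φ x ≤ ψ x) :
    0 ≤ ∫ x, ψ x ∂μ :=
  calc 0 = ∫ x, (φ (T x) - φ x) ∂μ := by
        rw [integral_sub (f := fun x => φ (T x)) (hT.integrable_comp_of_integrable hφ) hφ,
          integral_comp_of_measurePreserving hT hφ.aestronglyMeasurable, sub_self]
    _ ≤ ∫ x, ψ x ∂μ := integral_mono_ae ((hT.integrable_comp_of_integrable hφ).sub hφ) hψ h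

lemma integral_le_div_of_log_add_sub_le [IsProbabilityMeasure μ]
    (hT : MeasurePreserving T μ μ) {v : α → ℝ} (hv : Measurable v) {a b s C : ℝ} (hb : 0 < b)
    (hs : 0 < s) (hvb : ∀ᵐ x ∂μ, v x ∈ Set.Icc 0 C)
    (hstep : ∀ᵐ x ∂μ, log (v (T x) + s) - log (v x + s) ≤ a - b * v x) :
    ∫ x, v x ∂μ ≤ a / b := by
  have hvint : Integrable v μ := Integrable.of_mem_Icc 0 C hv.aemeasurable hvb
  have hlog : Integrable (fun x => log (v x + s)) μ :=
    Integrable.of_mem_Icc (log s) (log (C + s))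
      (measurable_log.comp (hv.add_const s)).aemeasurable
      (hvb.mono fun x hx => ⟨log_le_log hs (by linarith [hx.1]),
        log_le_log (by linarith [hx.1]) (by linarith [hx.2])⟩)
  have := integral_nonneg_of_sub_le (ψ := fun x => a - b * v x) hT hlog
    ((integrable_const a).sub (hvint.const_mul b)) hstep
  rw [integral_sub (integrable_const a) (hvint.const_mul b), integral_const_mul] at this
  rw [le_div_iff₀ hb]
  simp only [integral_const, probReal_univ, one_smul] at this
  linarith

lemma ae_mem_of_subset_preimage [IsProbabilityMeasure μ] (hT : MeasurePreserving T μ μ)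
    {S S' : Set α} (hS' : MeasurableSet S') (hS : μ S = 1) (hsub : S ⊆ T ⁻¹' S') :
    ∀ᵐ x ∂μ, x ∈ S' := by
  rw [ae_iff_measure_eq (p := (· ∈ S')) hS'.nullMeasurableSet, Set.ofPred_mem_eq, measure_univ]
  refine le_antisymm prob_le_one ?_
  calc (1 : ENNReal) = μ S := hS.symm
    _ ≤ μ (T ⁻¹' S') := measure_mono hsub
    _ = μ S' := hT.measure_preimage hS'.nullMeasurableSet

end Birkhoff

section Rate

variable {m : ℕ} {n : Fin m → ℕ} {A : St m n → Blocks m n} {i : Fin m} {x : St m n}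

lemma exp_birkhoffSum_le_mnorm_coc (hA : ∀ y j l, 0 ≤ A y i j l) {j : Fin (n i)}
    {g : St m n → ℝ} (hg : ∀ s, exp (g ((Phi A)^[s] x)) ≤ A ((Phi A)^[s] x) i j j) (t : ℕ) :
    exp (birkhoffSum (Phi A) g t x) ≤ mnorm (coc A i x t) := by
  rw [birkhoffSum, exp_sum]
  calc ∏ s ∈ Finset.range t, exp (g ((Phi A)^[s] x))
      ≤ ∏ s ∈ Finset.range t, A ((Phi A)^[s] x) i j j :=
        Finset.prod_le_prod (fun _ _ => (exp_pos _).le) fun s _ => hg s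
    _ ≤ coc A i x t j j := prod_diag_le_coc hA x j t
    _ ≤ mnorm (coc A i x t) := (le_abs_self _).trans (abs_apply_le_mnorm _ j j)

lemma log_mnorm_coc_div_le {K : ℝ} (hK : ∀ s, mnorm (A ((Phi A)^[s] x) i) ≤ K) {t : ℕ}
    (hpos : 0 < mnorm (coc A i x t)) (ht : t ≠ 0) :
    log (mnorm (coc A i x t)) / t ≤ log (n i) + log K := by
  have hle := mnorm_coc_le hK t
  have hK0 : 0 ≤ K := (mnorm_nonneg _).trans (hK 0)
  have hn : n i ≠ 0 := by rintro h; simp [h] at hle; linarith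
  have hKpos : 0 < K := hK0.lt_of_ne' fun h => by simp [h, ht] at hle; linarith
  have ht' : (1 : ℝ) ≤ t := by exact_mod_cast Nat.one_le_iff_ne_zero.2 ht
  have hlogn : 0 ≤ log (n i) := log_nonneg (by exact_mod_cast Nat.one_le_iff_ne_zero.2 hn)
  rw [div_le_iff₀ (by linarith)]
  calc log (mnorm (coc A i x t)) ≤ log (n i * K ^ t) := log_le_log hpos hle
    _ = log (n i) + t * log K := by
        rw [log_mul (by exact_mod_cast hn) (by positivity), log_pow]
    _ ≤ (log (n i) + log K) * t := by nlinarith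

lemma birkhoffAverage_le_log_mnorm_coc_div (hA : ∀ y j l, 0 ≤ A y i j l) {j : Fin (n i)}
    {g : St m n → ℝ} (hg : ∀ s, exp (g ((Phi A)^[s] x)) ≤ A ((Phi A)^[s] x) i j j) (t : ℕ) :
    birkhoffAverage ℝ (Phi A) g t x ≤ log (mnorm (coc A i x t)) / t := by
  have h := exp_birkhoffSum_le_mnorm_coc hA hg t
  rw [birkhoffAverage, smul_eq_mul, inv_mul_eq_div]
  exact div_le_div_of_nonneg_right ((le_log_iff_exp_le ((exp_pos _).trans_le h)).2 h)
    t.cast_nonneg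

lemma log_mnorm_coc_div_mem_Icc (hA : ∀ y j l, 0 ≤ A y i j l) {j : Fin (n i)}
    {g : St m n → ℝ} (hg : ∀ s, exp (g ((Phi A)^[s] x)) ≤ A ((Phi A)^[s] x) i j j)
    {lo hi K : ℝ} (hgb : ∀ s, g ((Phi A)^[s] x) ∈ Set.Icc lo hi)
    (hK : ∀ s, mnorm (A ((Phi A)^[s] x) i) ≤ K) {t : ℕ} (ht : t ≠ 0) :
    log (mnorm (coc A i x t)) / t ∈ Set.Icc lo (log (n i) + log K) :=
  ⟨(birkhoffAverage_mem_Icc hgb ht).1.trans (birkhoffAverage_le_log_mnorm_coc_div hA hg t),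
    log_mnorm_coc_div_le hK ((exp_pos _).trans_le (exp_birkhoffSum_le_mnorm_coc hA hg t)) ht⟩

lemma integral_le_rateMu {μ : Measure (St m n)} [IsProbabilityMeasure μ]
    (hT : MeasurePreserving (Phi A) μ μ) (hAc : Continuous A) (hA : ∀ y j l, 0 ≤ A y i j l)
    {S : Set (St m n)} (hS : ∀ᵐ x ∂μ, x ∈ S) (hSinv : Set.MapsTo (Phi A) S S)
    {j : Fin (n i)} {g : St m n → ℝ} (hgm : Measurable g) (hg : ∀ y ∈ S, exp (g y) ≤ A y i j j)
    {lo hi K : ℝ} (hgb : ∀ y ∈ S, g y ∈ Set.Icc lo hi) (hK : ∀ y ∈ S, mnorm (A y i) ≤ K) :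
    ∫ x, g x ∂μ ≤ rateMu A i μ := by
  have horbit : ∀ᵐ x ∂μ, ∀ s, (Phi A)^[s] x ∈ S := hS.mono fun x hx s => hSinv.iterate s hx
  have hgint : Integrable g μ :=
    Integrable.of_mem_Icc lo hi hgm.aemeasurable (hS.mono fun x hx => hgb x hx)
  have hRm : ∀ t, Measurable fun x => log (mnorm (coc A i x t)) / t := fun t =>
    (measurable_log.comp (continuous_mnorm.comp (continuous_coc hAc i t)).measurable).div_const _
  have hRbd : ∀ᵐ x ∂μ, ∀ t, log (mnorm (coc A i x (t + 1))) / (t + 1 : ℕ)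
      ∈ Set.Icc lo (log (n i) + log K) :=
    horbit.mono fun x hx t => log_mnorm_coc_div_mem_Icc hA (fun s => hg _ (hx s))
      (fun s => hgb _ (hx s)) (fun s => hK _ (hx s)) t.succ_ne_zero
  -- The finite-time rate at `t + 1` dominates a Birkhoff average of `g`, whose integral is `∫ g`.
  have hRint : ∀ t, ∫ x, g x ∂μ ≤ ∫ x, log (mnorm (coc A i x (t + 1))) / (t + 1 : ℕ) ∂μ := by
    intro t
    have havg : Integrable (birkhoffAverage ℝ (Phi A) g (t + 1)) μ :=
      Integrable.of_mem_Icc lo hi (measurable_birkhoffAverage hT.measurable hgm _).aemeasurable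
        (horbit.mono fun x hx => birkhoffAverage_mem_Icc (fun s => hgb _ (hx s)) t.succ_ne_zero)
    rw [← integral_birkhoffAverage hT hgint t.succ_ne_zero]
    exact integral_mono_ae havg
      (Integrable.of_mem_Icc _ _ (hRm (t + 1)).aemeasurable (hRbd.mono fun x hx => hx t))
      (horbit.mono fun x hx => birkhoffAverage_le_log_mnorm_coc_div hA (fun s => hg _ (hx s)) _)
  exact (le_integral_limsup_of_le_integral (fun t => hRm (t + 1)) hRbd hRint).trans_eq
    (integral_congr_ae (Eventually.of_forall fun x =>
      limsup_nat_add (fun t => log (mnorm (coc A i x t)) / t) 1))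

end Rate

lemma mul_exp_sub_mul_le {b : ℝ} (hb : 0 < b) (c v : ℝ) :
    v * exp (c - b * v) ≤ exp (c - 1) / b := by
  rw [le_div_iff₀ hb]
  calc v * exp (c - b * v) * b = b * v * exp (c - b * v) := by ring
    _ ≤ exp (b * v - 1) * exp (c - b * v) := by gcongr; linarith [add_one_le_exp (b * v - 1)]
    _ = exp (c - 1) := by rw [← exp_add]; ring_nf

lemma exists_log_add_sub_log_add_le {b c ρ : ℝ} (hb : 0 < b) (hc : 0 < c) (hρ : 0 < ρ)
    (C : ℝ) : ∃ s > 0, ∃ η > 0, ∀ v ∈ Set.Icc 0 C, ∀ w, 0 ≤ w →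
      w ≤ v * exp (c - b * v) + η → log (w + s) - log (v + s) ≤ c + ρ - b * v := by
  have hρ' : 0 < exp ρ - 1 := by linarith [add_one_lt_exp hρ.ne']
  set s := c / b * exp (c - b * C) * (exp ρ - 1) / 2 with hs_def
  have hs0 : 0 < s := by positivity
  refine ⟨s, hs0, min (s * (exp ρ - 1)) s, lt_min (by positivity) hs0, ?_⟩
  rintro v ⟨hv0, hvC⟩ w hw0 hw
  have hη := min_le_left (s * (exp ρ - 1)) s
  have hη' := min_le_right (s * (exp ρ - 1)) s
  set f := exp (c - b * v)
  have hf0 : 0 < f := exp_pos _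
  -- If `f ≥ 1` the shift `s` absorbs `η`; otherwise `v > c / b` and `v f (exp ρ - 1) ≥ 2 s`.
  have hgrow : w + s ≤ (v + s) * f * exp ρ := by
    rcases le_or_gt 1 f with hf1 | hf1
    · nlinarith [mul_nonneg (mul_nonneg hv0 hf0.le) hρ'.le,
        mul_nonneg (mul_nonneg hs0.le (exp_pos ρ).le) (sub_nonneg.2 hf1)]
    · have hcv : c / b < v := by
        rw [div_lt_iff₀ hb]; linarith [exp_lt_one_iff.1 hf1]
      have hfC : exp (c - b * C) ≤ f := exp_le_exp.2 (by nlinarith)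
      have : c / b * exp (c - b * C) ≤ v * f := mul_le_mul hcv.le hfC (exp_pos _).le hv0
      nlinarith [mul_le_mul_of_nonneg_right this hρ'.le, exp_pos ρ, hs_def]
  have hvs : 0 < v + s := by linarith
  calc log (w + s) - log (v + s) ≤ log ((v + s) * f * exp ρ) - log (v + s) := by
        gcongr
    _ = c + ρ - b * v := by
        rw [log_mul (by positivity) (exp_pos _).ne', log_mul hvs.ne' hf0.ne', log_exp, log_exp]
        ring

lemma exists_lt_one_of_eventually_nhdsLE {p : ℝ → Prop} (h : ∀ᶠ d in 𝓝[≤] 1, p d) :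
    ∃ δ0 : ℝ, 0 < δ0 ∧ δ0 < 1 ∧ ∀ d, δ0 < d → d ≤ 1 → p d := by
  obtain ⟨l, hl, hsub⟩ := mem_nhdsLE_iff_exists_Ioc_subset.1 h
  exact ⟨max l (1 / 2), by positivity, max_lt hl (by norm_num),
    fun d hd hd1 => hsub ⟨(le_max_left _ _).trans_lt hd, hd1⟩⟩

lemma eventually_neg_lt_log_and_mul_one_sub_lt {ι : Type*} [Finite ι] {ε : ℝ} (hε : 0 < ε)
    (C : ℝ) {η : ι → ℝ} (hη : ∀ j, 0 < η j) :
    ∀ᶠ d in 𝓝 (1 : ℝ), -ε < log d ∧ ∀ j, C * (1 - d) < η j :=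
  ((continuousAt_log one_ne_zero).eventually (lt_mem_nhds (by rw [log_one]; linarith))).and
    (eventually_all.2 fun j => (continuous_const.mul (continuous_const.sub continuous_id))
      |>.continuousAt.eventually (gt_mem_nhds (by simpa using hη j)))

end RP

namespace RP

/-- The two-species Lotka–Volterra metacommunity model on `k` patches:
`A_i(x) = diag{f^i_1(x),…,f^i_k(x)} Dⁱ` with
`f^i_j(x) = exp(−∑_h B^j_{ih} x^{hj} + c^j_i)`. -/
def MetaA {k : ℕ} (B : Fin k → Matrix (Fin 2) (Fin 2) ℝ)
    (c : Fin k → Fin 2 → ℝ) (D : Fin 2 → Matrix (Fin k) (Fin k) ℝ) :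
    St 2 (fun _ => k) → Blocks 2 (fun _ => k) :=
  fun x i => Matrix.of fun j l =>
    Real.exp (-(∑ h : Fin 2, B j i h * x h j) + c j i) * D i j l

open Real

section Model

variable {k : ℕ} (B : Fin k → Matrix (Fin 2) (Fin 2) ℝ) (c : Fin k → Fin 2 → ℝ)
  (D : Fin 2 → Matrix (Fin k) (Fin k) ℝ)

def residentBox (k : ℕ) (C : ℝ) : Set (St 2 (fun _ => k)) :=
  {x | (∀ j, x 0 j ∈ Set.Icc 0 C) ∧ x 1 = 0}

lemma measurableSet_residentBox (C : ℝ) : MeasurableSet (residentBox k C) := by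
  refine IsClosed.measurableSet ?_
  simp only [residentBox, Set.ofPred_and, Set.ofPred_forall]
  exact (isClosed_iInter fun j => isClosed_Icc.preimage (by fun_prop)).inter
    (isClosed_eq (by fun_prop) continuous_const)

lemma continuous_MetaA : Continuous (MetaA B c D) := by
  unfold MetaA
  fun_prop

lemma MetaA_nonneg {i : Fin 2} (hD : ∀ l l', 0 ≤ D i l l') (x : St 2 (fun _ => k))
    (l l' : Fin k) : 0 ≤ MetaA B c D x i l l' :=
  mul_nonneg (exp_pos _).le (hD l l')

lemma MetaA_apply_of_one_eq_zero {x : St 2 (fun _ => k)} (hx : x 1 = 0) (i : Fin 2)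
    (l l' : Fin k) : MetaA B c D x i l l' = exp (c l i - B l i 0 * x 0 l) * D i l l' := by
  simp [MetaA, Fin.sum_univ_two, hx, sub_eq_neg_add]

lemma Phi_MetaA_zero_apply {x : St 2 (fun _ => k)} (hx : x 1 = 0) (j : Fin k) :
    Phi (MetaA B c D) x 0 j = ∑ l, x 0 l * exp (c l 0 - B l 0 0 * x 0 l) * D 0 l j := by
  simp only [Phi, Matrix.vecMul, dotProduct, MetaA_apply_of_one_eq_zero B c D hx, mul_assoc]

lemma Phi_MetaA_one {x : St 2 (fun _ => k)} (hx : x 1 = 0) : Phi (MetaA B c D) x 1 = 0 := by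
  ext j
  simp [Phi, Matrix.vecMul, dotProduct, hx]

variable {B c D}

lemma mapsTo_residentBox (hB : ∀ j a b, 0 < B j a b) (hD : ∀ l l', 0 ≤ D 0 l l')
    (hcol : ∀ l, ∑ j, D 0 j l = 1) {C : ℝ} (hC : ∀ l, exp (c l 0 - 1) / B l 0 0 ≤ C) :
    Set.MapsTo (Phi (MetaA B c D)) {x ∈ cone 2 (fun _ => k) | x 1 = 0} (residentBox k C) := by
  rintro x ⟨hx, hx1⟩
  refine ⟨fun j => ⟨?_, ?_⟩, Phi_MetaA_one B c D hx1⟩ <;> rw [Phi_MetaA_zero_apply B c D hx1]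
  · exact Finset.sum_nonneg fun l _ =>
      mul_nonneg (mul_nonneg (hx 0 l) (exp_pos _).le) (hD l j)
  · calc ∑ l, x 0 l * exp (c l 0 - B l 0 0 * x 0 l) * D 0 l j ≤ ∑ l, C * D 0 l j :=
          Finset.sum_le_sum fun l _ => mul_le_mul_of_nonneg_right
            ((mul_exp_sub_mul_le (hB l 0 0) _ _).trans (hC l)) (hD l j)
      _ = C := by rw [← Finset.mul_sum, hcol, mul_one]

lemma residentBox_subset (C : ℝ) : residentBox k C ⊆ {x ∈ cone 2 (fun _ => k) | x 1 = 0} := by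
  rintro x ⟨hx0, hx1⟩
  refine ⟨fun i j => ?_, hx1⟩
  fin_cases i
  · exact (hx0 j).1
  · simp [hx1]

lemma Phi_MetaA_zero_le (hB : ∀ j a b, 0 < B j a b) (hD : ∀ l l', 0 ≤ D 0 l l')
    (hcol : ∀ l, ∑ j, D 0 j l = 1) {C : ℝ} (hC : ∀ l, exp (c l 0 - 1) / B l 0 0 ≤ C)
    {x : St 2 (fun _ => k)} (hx : x ∈ residentBox k C) (j : Fin k) :
    Phi (MetaA B c D) x 0 j ≤ x 0 j * exp (c j 0 - B j 0 0 * x 0 j) + C * (1 - D 0 j j) := by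
  have hDjj : D 0 j j ≤ 1 := (hcol j).symm ▸
    Finset.single_le_sum (fun l _ => hD l j) (Finset.mem_univ j)
  have hrest : ∑ l ∈ Finset.univ.erase j, D 0 l j = 1 - D 0 j j := by
    rw [← hcol j, ← Finset.add_sum_erase _ _ (Finset.mem_univ j), add_sub_cancel_left]
  rw [Phi_MetaA_zero_apply B c D hx.2, ← Finset.add_sum_erase _ _ (Finset.mem_univ j)]
  refine add_le_add ?_ ?_
  · exact mul_le_of_le_one_right (mul_nonneg (hx.1 j).1 (exp_pos _).le) hDjj
  · calc ∑ l ∈ Finset.univ.erase j, x 0 l * exp (c l 0 - B l 0 0 * x 0 l) * D 0 l j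
        ≤ ∑ l ∈ Finset.univ.erase j, C * D 0 l j :=
          Finset.sum_le_sum fun l _ => mul_le_mul_of_nonneg_right
            ((mul_exp_sub_mul_le (hB l 0 0) _ _).trans (hC l)) (hD l j)
      _ = C * (1 - D 0 j j) := by rw [← Finset.mul_sum, hrest]

lemma integral_resident_le {μ : Measure (St 2 (fun _ => k))} [IsProbabilityMeasure μ]
    (hT : MeasurePreserving (Phi (MetaA B c D)) μ μ) (hB : ∀ j a b, 0 < B j a b)
    (hD : ∀ l l', 0 ≤ D 0 l l') (hcol : ∀ l, ∑ j, D 0 j l = 1) {C : ℝ}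
    (hC : ∀ l, exp (c l 0 - 1) / B l 0 0 ≤ C) (hbox : ∀ᵐ x ∂μ, x ∈ residentBox k C)
    {j : Fin k} {s η ρ : ℝ} (hs : 0 < s)
    (hstep : ∀ v ∈ Set.Icc 0 C, ∀ w, 0 ≤ w → w ≤ v * exp (c j 0 - B j 0 0 * v) + η →
      log (w + s) - log (v + s) ≤ c j 0 + ρ - B j 0 0 * v)
    (hη : C * (1 - D 0 j j) ≤ η) :
    ∫ x, x 0 j ∂μ ≤ (c j 0 + ρ) / B j 0 0 :=
  integral_le_div_of_log_add_sub_le hT (by fun_prop) (hB j 0 0) hs (hbox.mono fun x hx => hx.1 j)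
    (hbox.mono fun x hx => hstep _ (hx.1 j) _
      ((mapsTo_residentBox hB hD hcol hC (residentBox_subset C hx)).1 j).1
      ((Phi_MetaA_zero_le hB hD hcol hC hx j).trans (by linarith)))

lemma log_diag_sub_le_rateMu {μ : Measure (St 2 (fun _ => k))} [IsProbabilityMeasure μ]
    (hT : MeasurePreserving (Phi (MetaA B c D)) μ μ) (hB : ∀ j a b, 0 < B j a b)
    (hD : ∀ i l l', 0 ≤ D i l l') (hcol : ∀ l, ∑ j, D 0 j l = 1) {C : ℝ}
    (hC : ∀ l, exp (c l 0 - 1) / B l 0 0 ≤ C) (hbox : ∀ᵐ x ∂μ, x ∈ residentBox k C)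
    {j : Fin k} (hDjj : 0 < D 1 j j) :
    c j 1 + log (D 1 j j) - B j 1 0 * ∫ x, x 0 j ∂μ ≤ rateMu (MetaA B c D) 1 μ := by
  have hm : Measurable fun x : St 2 (fun _ => k) => x 0 j := by fun_prop
  have hx0 : Integrable (fun x : St 2 (fun _ => k) => x 0 j) μ :=
    Integrable.of_mem_Icc 0 C hm.aemeasurable (hbox.mono fun x hx => hx.1 j)
  have hint : ∫ x, (c j 1 + log (D 1 j j) - B j 1 0 * x 0 j) ∂μ
      = c j 1 + log (D 1 j j) - B j 1 0 * ∫ x, x 0 j ∂μ := by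
    rw [integral_sub (integrable_const _) (hx0.const_mul _), integral_const_mul]
    simp
  rw [← hint]
  refine integral_le_rateMu hT (continuous_MetaA B c D) (MetaA_nonneg B c D (hD 1)) hbox
    ((mapsTo_residentBox hB (hD 0) hcol hC).mono_left (residentBox_subset C))
    (j := j) (lo := c j 1 + log (D 1 j j) - B j 1 0 * C) (hi := c j 1 + log (D 1 j j))
    (K := ∑ a, ∑ l, exp (c a 1) * D 1 a l) (by fun_prop) (fun y hy => ?_) (fun y hy => ?_)
    (fun y hy => ?_)
  · rw [MetaA_apply_of_one_eq_zero B c D hy.2, add_sub_right_comm, exp_add, exp_log hDjj]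
  · obtain ⟨hy0, hyC⟩ := hy.1 j
    have := hB j 1 0
    constructor <;> nlinarith
  · refine Finset.sum_le_sum fun a _ => Finset.sum_le_sum fun l _ => ?_
    rw [MetaA_apply_of_one_eq_zero B c D hy.2,
      abs_of_nonneg (mul_nonneg (exp_pos _).le (hD 1 a l))]
    exact mul_le_mul_of_nonneg_right (exp_le_exp.2 (by nlinarith [hB a 1 0, (hy.1 a).1]))
      (hD 1 a l)

/-- Half of `ε` pays for `log d²_{jj}`, the other half for the excess of the resident mean over
`c^j_1 / B^j_{11}`. -/
lemma sub_le_rateMu_of_log_add_sub_le {μ : Measure (St 2 (fun _ => k))} [IsProbabilityMeasure μ]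
    (hT : MeasurePreserving (Phi (MetaA B c D)) μ μ) (hB : ∀ j a b, 0 < B j a b)
    (hD : ∀ i l l', 0 ≤ D i l l') (hcol : ∀ l, ∑ j, D 0 j l = 1) {C : ℝ}
    (hC : ∀ l, exp (c l 0 - 1) / B l 0 0 ≤ C) (hbox : ∀ᵐ x ∂μ, x ∈ residentBox k C)
    {j : Fin k} {ε s η : ℝ} (hs : 0 < s)
    (hstep : ∀ v ∈ Set.Icc 0 C, ∀ w, 0 ≤ w → w ≤ v * exp (c j 0 - B j 0 0 * v) + η →
      log (w + s) - log (v + s) ≤ c j 0 + ε * B j 0 0 / (2 * B j 1 0) - B j 0 0 * v)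
    (hη : C * (1 - D 0 j j) ≤ η) (hDjj : 0 < D 1 j j) (hlog : -(ε / 2) ≤ log (D 1 j j)) :
    c j 1 - B j 1 0 * c j 0 / B j 0 0 - ε ≤ rateMu (MetaA B c D) 1 μ := by
  have hres := integral_resident_le hT hB (hD 0) hcol hC hbox hs hstep hη
  have hinv := log_diag_sub_le_rateMu hT hB hD hcol hC hbox hDjj
  have hρ : B j 1 0 * ((c j 0 + ε * B j 0 0 / (2 * B j 1 0)) / B j 0 0)
      = B j 1 0 * c j 0 / B j 0 0 + ε / 2 := by
    have := (hB j 0 0).ne'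
    have := (hB j 1 0).ne'
    field_simp
  nlinarith [mul_le_mul_of_nonneg_left hres (hB j 1 0).le]

end Model

/-- Proposition 8: for dispersal matrices with diagonal entries
close enough to 1, the long-term growth rate of species 2 with respect to any
invariant measure supported on the set where species 1 alone is present is at
least `max_j (c^j_2 − B^j_{21} c^j_1 / B^j_{11}) − ε`. -/
theorem metacommunity_invasion_rate_lower_bound {k : ℕ}
    (B : Fin k → Matrix (Fin 2) (Fin 2) ℝ) (c : Fin k → Fin 2 → ℝ)
    (hB : ∀ j a b, 0 < B j a b) (hc : ∀ j a, 0 < c j a)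
    (ε : ℝ) (hε : 0 < ε) :
    ∃ δ0 : ℝ, 0 < δ0 ∧ δ0 < 1 ∧
      ∀ D : Fin 2 → Matrix (Fin k) (Fin k) ℝ,
        (∀ i, IsPrimitive (D i)) →
        (∀ i l, ∑ j, D i j l = 1) →
        (∀ i j, δ0 < D i j j ∧ D i j j ≤ 1) →
        ∀ μ : Measure (St 2 (fun _ => k)), IsProbabilityMeasure μ →
          μ.map (Phi (MetaA B c D)) = μ →
          μ {x ∈ cone 2 (fun _ => k) | snorm x 1 = 0} = 1 →
          ∀ j, c j 1 - B j 1 0 * c j 0 / B j 0 0 - ε ≤ rateMu (MetaA B c D) 1 μ := by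
  set C := ∑ l, exp (c l 0 - 1) / B l 0 0
  have hC : ∀ l, exp (c l 0 - 1) / B l 0 0 ≤ C := fun l =>
    Finset.single_le_sum (f := fun l => exp (c l 0 - 1) / B l 0 0)
      (fun l _ => (div_pos (exp_pos _) (hB l 0 0)).le) (Finset.mem_univ l)
  choose s hs η hη hstep using fun j => exists_log_add_sub_log_add_le (hB j 0 0) (hc j 0)
    (ρ := ε * B j 0 0 / (2 * B j 1 0)) (by have := hB j 0 0; have := hB j 1 0; positivity) C
  obtain ⟨δ0, hδ0, hδ1, hδ⟩ := exists_lt_one_of_eventually_nhdsLE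
    (nhdsWithin_le_nhds (eventually_neg_lt_log_and_mul_one_sub_lt (half_pos hε) C hη))
  refine ⟨δ0, hδ0, hδ1, fun D hprim hcol hdiag μ _ hmap hsupp j => ?_⟩
  have hD : ∀ i l l', 0 ≤ D i l l' := fun i => (hprim i).1
  have hT : MeasurePreserving (Phi (MetaA B c D)) μ μ :=
    ⟨(continuous_Phi (continuous_MetaA B c D)).measurable, hmap⟩
  have hbox : ∀ᵐ x ∂μ, x ∈ residentBox k C :=
    ae_mem_of_subset_preimage hT (measurableSet_residentBox C) hsupp fun x hx =>
      mapsTo_residentBox hB (hD 0) (hcol 0) hC ⟨hx.1, snorm_eq_zero_iff.1 hx.2⟩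
  obtain ⟨-, hη0⟩ := hδ _ (hdiag 0 j).1 (hdiag 0 j).2
  obtain ⟨hlog1, -⟩ := hδ _ (hdiag 1 j).1 (hdiag 1 j).2
  exact sub_le_rateMu_of_log_add_sub_le hT hB hD (hcol 0) hC hbox (hs j) (hstep j) (hη0 j).le
    (hδ0.trans (hdiag 1 j).1) hlog1.le

end RP
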